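/- arXiv:1803.10949 — 6 statements merged into one kernel-verified Lean document; each statement's English description precedes it below -/
import Mathlib

section
/- Let F be a real closed field and let L = F × K where K = F[√-1]. Define the adjoint map ♯ : L → L by (b,c)♯ = (c·ι(c), b·ι(c)), where ι is the nontrivial F-automorphism of K. Then for every invertible element λ ∈ L, there exists an invertible element ℓ ∈ L such that ℓ⁻¹ · ℓ♯ = λ. -/
/-!
Writing `ℓ = (b, c)`, the equation `ℓ⁻¹ · ℓ♯ = λ` means `c · ι(c) = b λ₁` and `b · ι(c) = c λ₂`.
Choose `d ∈ K` with `d² = λ₁ λ₂` (possible as `K` is algebraically closed) and put `c = ι(d)`,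
`b = c λ₂ / d`. This `b` is fixed by `ι` because `ι(d²) = c²` and `λ₁ ∈ F`, so it lies in `F`,
and both equations follow from `d² = λ₁ λ₂`.
-/

/-- The adjoint map on the cubic étale algebra `L = F × K`,
`(b, c)♯ = (c·ι(c), b·ι(c))`, where `c·ι(c)` is recorded via the norm map. -/
def sharpFK {F K : Type*} [Field F] [Field K] [Algebra F K]
    (ι : K ≃ₐ[F] K) (norm : K → F) (p : F × K) : F × K :=
  (norm p.2, algebraMap F K p.1 * ι p.2)

section FixedPoints

variable {F K : Type*} [CommRing F] [CommRing K] [Algebra F K] {ι : K ≃ₐ[F] K} {i : K}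

theorem AlgEquiv.apply_ne_self_of_ne_refl (hι : ι ≠ AlgEquiv.refl)
    (hgen : ∀ c : K, ∃ x y : F, c = algebraMap F K x + algebraMap F K y * i) : ι i ≠ i := by
  intro hi
  apply hι
  ext c
  obtain ⟨x, y, rfl⟩ := hgen c
  simp [hi]

theorem AlgEquiv.exists_algebraMap_eq_of_apply_eq [NoZeroDivisors K] (hι : ι ≠ AlgEquiv.refl)
    (hgen : ∀ c : K, ∃ x y : F, c = algebraMap F K x + algebraMap F K y * i) {z : K}
    (hz : ι z = z) : ∃ x : F, algebraMap F K x = z := by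
  obtain ⟨x, y, rfl⟩ := hgen z
  have hy : algebraMap F K y * (ι i - i) = 0 := by
    simp only [map_add, map_mul, AlgEquiv.commutes] at hz
    linear_combination hz
  have hy0 : algebraMap F K y = 0 :=
    (mul_eq_zero.mp hy).resolve_right (sub_ne_zero.mpr (ι.apply_ne_self_of_ne_refl hι hgen))
  exact ⟨x, by rw [hy0, zero_mul, add_zero]⟩

end FixedPoints

section Adjoint

variable {F K : Type*} [Field F] [Field K] [Algebra F K] {ι : K ≃ₐ[F] K}

theorem apply_mul_div_eq_self_of_sq_eq (hι2 : ∀ c, ι (ι c) = c) {lam : F × K} {d : K}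
    (hd0 : d ≠ 0) (hd : d ^ 2 = algebraMap F K lam.1 * lam.2) :
    ι (ι d * lam.2 / d) = ι d * lam.2 / d := by
  have hc0 : ι d ≠ 0 := (map_ne_zero ι).mpr hd0
  have hc2 : ι d ^ 2 = algebraMap F K lam.1 * ι lam.2 := by
    rw [← map_pow, hd, map_mul, AlgEquiv.commutes]
  rw [map_div₀, map_mul, hι2, div_eq_div_iff hc0 hd0]
  linear_combination ι lam.2 * hd - lam.2 * hc2

theorem sharpFK_eq_mul (hι2 : ∀ c, ι (ι c) = c) {norm : K → F}
    (hnorm : ∀ c, algebraMap F K (norm c) = c * ι c) {lam : F × K} {b : F} {d : K}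
    (hd0 : d ≠ 0) (hd : d ^ 2 = algebraMap F K lam.1 * lam.2)
    (hb : algebraMap F K b * d = ι d * lam.2) :
    sharpFK ι norm (b, ι d) = (b, ι d) * lam := by
  refine Prod.ext ?_ ?_
  · apply (algebraMap F K).injective
    apply mul_right_cancel₀ hd0
    rw [sharpFK, hnorm, hι2, Prod.fst_mul, map_mul]
    linear_combination ι d * hd - algebraMap F K lam.1 * hb
  · rw [sharpFK, hι2]
    exact hb

end Adjoint

theorem stmt_0_general (F K : Type*) [Field F] [Field K] [Algebra F K]
    [IsAlgClosed K]
    (ι : K ≃ₐ[F] K) (hι2 : ∀ c, ι (ι c) = c) (hι1 : ι ≠ AlgEquiv.refl)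
    (i : K)
    (hgen : ∀ c : K, ∃ x y : F, c = algebraMap F K x + algebraMap F K y * i)
    (norm : K → F) (hnorm : ∀ c, algebraMap F K (norm c) = c * ι c)
    (lam : F × K) (hlam : IsUnit lam) :
    ∃ ℓ : F × K, IsUnit ℓ ∧ Ring.inverse ℓ * sharpFK ι norm ℓ = lam := by
  obtain ⟨hl1, hl2⟩ := Prod.isUnit_iff.mp hlam
  obtain ⟨d, hd⟩ := IsAlgClosed.exists_pow_nat_eq (algebraMap F K lam.1 * lam.2) two_pos
  have hd0 : d ≠ 0 := by
    rintro rfl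
    simp [hl1.ne_zero, hl2.ne_zero] at hd
  obtain ⟨b, hb⟩ := ι.exists_algebraMap_eq_of_apply_eq hι1 hgen
    (apply_mul_div_eq_self_of_sq_eq hι2 hd0 hd)
  have hb' : algebraMap F K b * d = ι d * lam.2 := by rw [hb, div_mul_cancel₀ _ hd0]
  have hunit : IsUnit (b, ι d) := by
    have hb0 : b ≠ 0 := by
      rintro rfl
      simp [hd0, hl2.ne_zero] at hb'
    exact Prod.isUnit_iff.mpr ⟨hb0.isUnit, ((map_ne_zero ι).mpr hd0).isUnit⟩
  refine ⟨(b, ι d), hunit, ?_⟩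
  rw [sharpFK_eq_mul hι2 hnorm hd0 hd hb', ← mul_assoc, Ring.inverse_mul_cancel _ hunit, one_mul]

/-- Over a real closed field `F` with `K = F[√-1]` and `L = F × K`, every unit
`λ` of `L` is of the form `ℓ⁻¹ · ℓ♯` for some unit `ℓ` of `L`. -/
theorem stmt_0 (F K : Type*) [Field F] [LinearOrder F] [IsStrictOrderedRing F] [Field K] [Algebra F K]
    [IsAlgClosed K]
    (hsq : ∀ x : F, 0 ≤ x → IsSquare x)
    (ι : K ≃ₐ[F] K) (hι2 : ∀ c, ι (ι c) = c) (hι1 : ι ≠ AlgEquiv.refl)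
    (i : K) (hi : i ^ 2 = -1)
    (hgen : ∀ c : K, ∃ x y : F, c = algebraMap F K x + algebraMap F K y * i)
    (norm : K → F) (hnorm : ∀ c, algebraMap F K (norm c) = c * ι c)
    (lam : F × K) (hlam : IsUnit lam) :
    ∃ ℓ : F × K, IsUnit ℓ ∧ Ring.inverse ℓ * sharpFK ι norm ℓ = lam :=
  stmt_0_general F K ι hι2 hι1 i hgen norm hnorm lam hlam
end

section
/- Let C be a Cayley (octonion) algebra over a field F of characteristic ≠ 2, with norm n, and let C⁰ = {x ∈ C : n(x,1) = 0}. For x ∈ C⁰, the triple (Lₓ, −Tₓ, Rₓ) belongs to the triality Lie algebra tri(C) of the associated para-Cayley algebra, i.e., Lₓ(u • v) = −Tₓ(u) • v + u • Rₓ(v) for all u, v ∈ C, where Lₓ, Rₓ are left and right multiplication in C and Tₓ = Lₓ + Rₓ. -/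
/-!
Polarizing the composition law `n (x * y) = n x * n y` expresses the adjoints of left and right
multiplications through the trace `t z = polar n z 1`; for `t x = 0` this is exactly the
skew-symmetry of `Lₓ`, `Rₓ` and hence of `Tₓ`. Nondegeneracy of the norm then turns the adjoint
formulas into the quadratic equation `z² = t z • z - n z • 1` and into left alternativity, and
makes `z ↦ z̄` an anti-automorphism. Rewriting the para-Hurwitz products `ū v̄` with it, the
triality identity for `x̄ = -x` becomes the linearized left alternative law
`x (ū v̄) + ū (x v̄) = (x ū) v̄ + (ū x) v̄`.
-/

open QuadraticMap

namespace CompositionAlgebra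

variable {F C : Type*} [CommRing F] [NonAssocRing C] [Module F C] {n : QuadraticForm F C}

def conj (n : QuadraticForm F C) (z : C) : C := polar n z 1 • (1 : C) - z

theorem conj_add (z w : C) : conj n (z + w) = conj n z + conj n w := by
  simp only [conj, polar_add_left]
  module

theorem conj_neg (z : C) : conj n (-z) = -conj n z := by
  simp only [conj, polar_neg_left]
  module

theorem conj_of_polar_one_eq_zero {x : C} (hx : polar n x 1 = 0) : conj n x = -x := by
  rw [conj, hx, zero_smul, zero_sub]

theorem eq_of_forall_polar_eq (hnd : ∀ x : C, (∀ y : C, polar n x y = 0) → x = 0) {a b : C}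
    (h : ∀ w : C, polar n a w = polar n b w) : a = b :=
  sub_eq_zero.mp <| hnd _ fun w => by rw [polar_sub_left, h w, sub_self]

section Composition

variable (hcomp : ∀ x y : C, n (x * y) = n x * n y)
include hcomp

theorem polar_mul_mul_left (a c d : C) : polar n (a * c) (a * d) = n a * polar n c d := by
  simp only [polar, ← mul_add, hcomp]
  ring

theorem polar_mul_mul_add_polar_mul_mul (a b c d : C) :
    polar n (a * c) (b * d) + polar n (a * d) (b * c) = polar n a b * polar n c d := by
  have e := polar_mul_mul_left hcomp (a + b) c d
  have hn : n (a + b) = n a + n b + polar n a b := by rw [polar]; ring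
  rw [add_mul, add_mul, polar_add_left, polar_add_right, polar_add_right, hn,
    polar_mul_mul_left hcomp a c d, polar_mul_mul_left hcomp b c d] at e
  linear_combination e - polar_comm (⇑n) (b * c) (a * d)

theorem polar_mul_left_eq (u v w : C) :
    polar n (u * v) w = polar n u 1 * polar n v w - polar n v (u * w) := by
  have e := polar_mul_mul_add_polar_mul_mul hcomp u 1 v w
  rw [one_mul, one_mul] at e
  linear_combination e - polar_comm (⇑n) (u * w) v

theorem polar_mul_right_eq (u v w : C) :
    polar n (u * v) w = polar n v 1 * polar n u w - polar n u (w * v) := by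
  have e := polar_mul_mul_add_polar_mul_mul hcomp u w v 1
  rw [mul_one, mul_one] at e
  linear_combination e

theorem polar_mul_one (u v : C) :
    polar n (u * v) 1 = polar n u 1 * polar n v 1 - polar n u v := by
  have e := polar_mul_left_eq hcomp u v 1
  rw [mul_one] at e
  linear_combination e - polar_comm (⇑n) v u

theorem polar_mul_left_add_polar_mul_left {x : C} (hx : polar n x 1 = 0) (u v : C) :
    polar n (x * u) v + polar n u (x * v) = 0 := by
  linear_combination polar_mul_left_eq hcomp x u v + polar n u v * hx

theorem polar_mul_right_add_polar_mul_right {x : C} (hx : polar n x 1 = 0) (u v : C) :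
    polar n (u * x) v + polar n u (v * x) = 0 := by
  linear_combination polar_mul_right_eq hcomp u x v + polar n u v * hx

variable (hnd : ∀ x : C, (∀ y : C, polar n x y = 0) → x = 0)
include hnd

theorem mul_mul_self_left (y z : C) : y * (y * z) = polar n y 1 • (y * z) - n y • z := by
  refine eq_of_forall_polar_eq hnd fun w => ?_
  rw [polar_sub_left, polar_smul_left, polar_smul_left, smul_eq_mul, smul_eq_mul]
  linear_combination polar_mul_left_eq hcomp y (y * z) w - polar_mul_mul_left hcomp y z w

theorem mul_self_eq (y : C) : y * y = polar n y 1 • y - n y • (1 : C) := by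
  simpa using mul_mul_self_left hcomp hnd y 1

theorem mul_add_mul_comm (u v : C) :
    u * v + v * u = polar n u 1 • v + polar n v 1 • u - polar n u v • (1 : C) := by
  have e := mul_self_eq hcomp hnd (u + v)
  simp only [mul_add, add_mul] at e
  rw [polar_add_left, mul_self_eq hcomp hnd u, mul_self_eq hcomp hnd v] at e
  have hn : n (u + v) = n u + n v + polar n u v := by rw [polar]; ring
  rw [hn] at e
  linear_combination (norm := module) e

variable [IsScalarTower F C C]

theorem mul_mul_self_left_eq_mul_self_mul (y z : C) : y * (y * z) = (y * y) * z := by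
  rw [mul_mul_self_left hcomp hnd y z, mul_self_eq hcomp hnd y, sub_mul, smul_mul_assoc,
    smul_mul_assoc, one_mul]

theorem mul_mul_add_mul_mul (a b z : C) :
    a * (b * z) + b * (a * z) = (a * b) * z + (b * a) * z := by
  have e := mul_mul_self_left_eq_mul_self_mul hcomp hnd (a + b) z
  simp only [add_mul, mul_add] at e
  rw [mul_mul_self_left_eq_mul_self_mul hcomp hnd a z,
    mul_mul_self_left_eq_mul_self_mul hcomp hnd b z] at e
  linear_combination (norm := module) e

variable [SMulCommClass F C C]

theorem conj_mul (u v : C) : conj n (u * v) = conj n v * conj n u := by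
  simp only [conj, polar_mul_one hcomp u v, sub_mul, mul_sub, smul_mul_assoc, mul_smul_comm,
    one_mul, mul_one]
  linear_combination (norm := module) -mul_add_mul_comm hcomp hnd u v

theorem mul_conj_mul_conj {x : C} (hx : polar n x 1 = 0) (u v : C) :
    x * (conj n u * conj n v) =
      conj n (-(x * u + u * x)) * conj n v + conj n u * conj n (v * x) := by
  rw [conj_neg, conj_add, conj_mul hcomp hnd, conj_mul hcomp hnd, conj_mul hcomp hnd,
    conj_of_polar_one_eq_zero hx]
  simp only [mul_neg, neg_mul, neg_add, neg_neg, add_mul]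
  linear_combination (norm := module) mul_mul_add_mul_mul hcomp hnd x (conj n u) (conj n v)

end Composition

end CompositionAlgebra

theorem stmt_7_general (F : Type*) [Field F] (C : Type*) [NonAssocRing C] [Module F C]
    [SMulCommClass F C C] [IsScalarTower F C C]
    (n : QuadraticForm F C)
    (hcomp : ∀ x y : C, n (x * y) = n x * n y)
    (hnd : ∀ x : C, (∀ y : C, polar n x y = 0) → x = 0)
    (x : C) (hx : polar n x 1 = 0) :
    let conj : C → C := fun z => polar n z 1 • (1 : C) - z
    (∀ u v : C, polar n (x * u) v + polar n u (x * v) = 0) ∧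
    (∀ u v : C, polar n (x * u + u * x) v + polar n u (x * v + v * x) = 0) ∧
    (∀ u v : C, polar n (u * x) v + polar n u (v * x) = 0) ∧
    (∀ u v : C,
      x * (conj u * conj v) = conj (-(x * u + u * x)) * conj v + conj u * conj (v * x)) := by
  have hL := CompositionAlgebra.polar_mul_left_add_polar_mul_left hcomp hx
  have hR := CompositionAlgebra.polar_mul_right_add_polar_mul_right hcomp hx
  refine ⟨hL, fun u v => ?_, hR, CompositionAlgebra.mul_conj_mul_conj hcomp hnd hx⟩
  rw [polar_add_left, polar_add_right]
  linear_combination hL u v + hR u v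

/-- In a Cayley algebra `C` over a field of characteristic `≠ 2`, for any
trace-zero element `x` the triple `(Lₓ, −Tₓ, Rₓ)` belongs to the triality Lie
algebra of the associated para-Cayley algebra: each of `Lₓ`, `Tₓ`, `Rₓ` is
skew-symmetric with respect to the polar form of the norm, and
`Lₓ(u • v) = (−Tₓ u) • v + u • (Rₓ v)` for all `u, v`. -/
theorem stmt_7 (F : Type*) [Field F] (C : Type*) [NonAssocRing C] [Module F C]
    [SMulCommClass F C C] [IsScalarTower F C C] [FiniteDimensional F C]
    (h2 : (2 : F) ≠ 0)
    (n : QuadraticForm F C) (hdim : Module.finrank F C = 8)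
    (hcomp : ∀ x y : C, n (x * y) = n x * n y)
    (hnd : ∀ x : C, (∀ y : C, polar n x y = 0) → x = 0)
    (x : C) (hx : polar n x 1 = 0) :
    let conj : C → C := fun z => polar n z 1 • (1 : C) - z
    (∀ u v : C, polar n (x * u) v + polar n u (x * v) = 0) ∧
    (∀ u v : C, polar n (x * u + u * x) v + polar n u (x * v + v * x) = 0) ∧
    (∀ u v : C, polar n (u * x) v + polar n u (v * x) = 0) ∧
    (∀ u v : C,
      x * (conj u * conj v) = conj (-(x * u + u * x)) * conj v + conj u * conj (v * x)) :=
  stmt_7_general F C n hcomp hnd x hx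
end

section
/- Let (S, ⋆, n) be a symmetric composition algebra over F and let L = F × F × F with ρ the cyclic shift ρ(ℓ₁,ℓ₂,ℓ₃) = (ℓ₂,ℓ₃,ℓ₁). Define on V = S × S × S the L-valued quadratic form Q = (n,n,n) and the product (x₁,x₂,x₃) * (y₁,y₂,y₃) = (x₂⋆y₃, x₃⋆y₁, x₁⋆y₂). Then Q(x*y) = ρ(Q(x))·ρ²(Q(y)) and b_Q(x*y, z) = ρ(b_Q(y*z, x)) for all x, y, z ∈ V, so (V, L, ρ, *, Q) is a cyclic composition. -/
open QuadraticMap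

theorem polar_comp_rotate {R M : Type*} [CommRing R] [AddCommGroup M] (n : M → R)
    (mul : M → M → M) (hassoc : ∀ x y z, polar n (mul x y) z = polar n x (mul y z))
    (x y z : M) :
    polar n (mul x y) z = polar n (mul y z) x := by
  rw [hassoc, polar_comm]

theorem stmt_11_general (F : Type*) [Field F] (S : Type*) [AddCommGroup S] [Module F S]
    (mul : S →ₗ[F] S →ₗ[F] S) (n : QuadraticForm F S)
    (hcomp : ∀ x y : S, n (mul x y) = n x * n y)
    (hassoc : ∀ x y z : S, polar n (mul x y) z = polar n x (mul y z)) :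
    let ρ : F × F × F → F × F × F := fun l => (l.2.1, l.2.2, l.1)
    let Q : S × S × S → F × F × F := fun x => (n x.1, n x.2.1, n x.2.2)
    let bQ : S × S × S → S × S × S → F × F × F := fun x y =>
      (polar n x.1 y.1, polar n x.2.1 y.2.1, polar n x.2.2 y.2.2)
    let star : S × S × S → S × S × S → S × S × S := fun x y =>
      (mul x.2.1 y.2.2, mul x.2.2 y.1, mul x.1 y.2.1)
    (∀ x y : S × S × S, Q (star x y) = ρ (Q x) * ρ (ρ (Q y))) ∧
    (∀ x y z : S × S × S, bQ (star x y) z = ρ (bQ (star y z) x)) := by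
  intro ρ Q bQ star
  have rotate := polar_comp_rotate n (fun a b => mul a b) hassoc
  refine ⟨fun x y => ?_, fun x y z => ?_⟩
  · simp only [ρ, Q, star, Prod.mul_def, hcomp]
  · simp only [ρ, bQ, star, Prod.ext_iff]
    exact ⟨rotate _ _ _, rotate _ _ _, rotate _ _ _⟩

/-- Let `(S, ⋆, n)` be a symmetric composition algebra over `F` and let
`L = F × F × F` with cyclic shift `ρ`.  On `V = S × S × S` with
`Q = (n, n, n)` and `(x₁,x₂,x₃) * (y₁,y₂,y₃) = (x₂⋆y₃, x₃⋆y₁, x₁⋆y₂)`,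
one has `Q(x*y) = ρ(Q x)·ρ²(Q y)` and `b_Q(x*y, z) = ρ(b_Q(y*z, x))`,
so `(V, L, ρ, *, Q)` is a cyclic composition. -/
theorem stmt_11 (F : Type*) [Field F] (S : Type*) [AddCommGroup S] [Module F S]
    [FiniteDimensional F S]
    (mul : S →ₗ[F] S →ₗ[F] S) (n : QuadraticForm F S)
    (hcomp : ∀ x y : S, n (mul x y) = n x * n y)
    (hnd : ∀ x : S, (∀ y : S, polar n x y = 0) → x = 0)
    (hassoc : ∀ x y z : S, polar n (mul x y) z = polar n x (mul y z)) :
    let ρ : F × F × F → F × F × F := fun l => (l.2.1, l.2.2, l.1)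
    let Q : S × S × S → F × F × F := fun x => (n x.1, n x.2.1, n x.2.2)
    let bQ : S × S × S → S × S × S → F × F × F := fun x y =>
      (polar n x.1 y.1, polar n x.2.1 y.2.1, polar n x.2.2 y.2.2)
    let star : S × S × S → S × S × S → S × S × S := fun x y =>
      (mul x.2.1 y.2.2, mul x.2.2 y.1, mul x.1 y.2.1)
    (∀ x y : S × S × S, Q (star x y) = ρ (Q x) * ρ (ρ (Q y))) ∧
    (∀ x y z : S × S × S, bQ (star x y) z = ρ (bQ (star y z) x)) :=
  stmt_11_general F S mul n hcomp hassoc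
end

section
/- Any cyclic composition (V, L, ρ, *, Q) satisfies the identities (x*y)*x = ρ²(Q(x))·y and x*(y*x) = ρ(Q(x))·y for all x, y ∈ V. -/
/-!
Linearizing `Q (x * y) = ρ (Q x) ρ² (Q y)` in `y` gives
`b (x * y, x * z) = ρ (Q x) ρ² (b (y, z))`, and symmetrically in `x`. The cyclic invariance of
`b` rewrites `b ((x * y) * x, z)` as `ρ (b (x * z, x * y))`, which by the linearized identity and
`ρ³ = 1` equals `ρ² (Q x) b (y, z)`; nondegeneracy of `b` then identifies `(x * y) * x`.
The identity for `x * (y * x)` is obtained the same way from the other linearization.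
-/

open QuadraticMap

section CyclicComposition

variable {L V : Type*} [CommRing L] [AddCommGroup V] [Module L V]
  {Q : QuadraticMap L V L} {star : V → V → V}

theorem polar_star_star_right (σ τ : L →+* L)
    (hadd : ∀ x y z : V, star x (y + z) = star x y + star x z)
    (hmul : ∀ x y : V, Q (star x y) = σ (Q x) * τ (Q y)) (x y z : V) :
    polar Q (star x y) (star x z) = σ (Q x) * τ (polar Q y z) := by
  simp only [polar, ← hadd, hmul, map_sub]
  ring

theorem polar_star_star_left (σ τ : L →+* L)
    (hadd : ∀ x y z : V, star (x + y) z = star x z + star y z)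
    (hmul : ∀ x y : V, Q (star x y) = σ (Q x) * τ (Q y)) (x y z : V) :
    polar Q (star y x) (star z x) = σ (polar Q y z) * τ (Q x) := by
  simp only [polar, ← hadd, hmul, map_sub]
  ring

theorem eq_of_forall_polar_eq (hQnd : ∀ v : V, (∀ w : V, polar Q v w = 0) → v = 0) {u v : V}
    (h : ∀ w : V, polar Q u w = polar Q v w) : u = v :=
  sub_eq_zero.mp <| hQnd _ fun w => by rw [polar_sub_left, h, sub_self]

variable {ρ : L →+* L} (hρ3 : ∀ ℓ : L, ρ (ρ (ρ ℓ)) = ℓ)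
  (hQnd : ∀ v : V, (∀ w : V, polar Q v w = 0) → v = 0)
  (hQmul : ∀ x y : V, Q (star x y) = ρ (Q x) * ρ (ρ (Q y)))
include hρ3 hQnd hQmul

theorem star_star_self_left (hadd : ∀ x y z : V, star x (y + z) = star x y + star x z)
    (hb : ∀ x y z : V, polar Q (star x y) z = ρ (polar Q (star y z) x)) (x y : V) :
    star (star x y) x = ρ (ρ (Q x)) • y := by
  refine eq_of_forall_polar_eq hQnd fun z => ?_
  rw [hb, polar_comm, polar_star_star_right ρ (ρ.comp ρ) hadd hQmul, map_mul,
    RingHom.comp_apply, hρ3, polar_smul_left, polar_comm, smul_eq_mul]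

theorem star_self_star_right (hadd : ∀ x y z : V, star (x + y) z = star x z + star y z)
    (hb : ∀ x y z : V, polar Q (star x y) z = ρ (ρ (polar Q (star z x) y))) (x y : V) :
    star x (star y x) = ρ (Q x) • y := by
  refine eq_of_forall_polar_eq hQnd fun z => ?_
  rw [hb, polar_star_star_left ρ (ρ.comp ρ) hadd hQmul, map_mul, map_mul, RingHom.comp_apply,
    hρ3, hρ3, mul_comm, polar_smul_left, polar_comm, smul_eq_mul]

end CyclicComposition

theorem stmt_12_general (F : Type*) [Field F] (L : Type*) [CommRing L] [Algebra F L]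
    (ρ : L ≃ₐ[F] L) (hρ3 : ∀ ℓ : L, ρ (ρ (ρ ℓ)) = ℓ)
    (V : Type*) [AddCommGroup V] [Module L V]
    (Q : QuadraticMap L V L)
    (hQnd : ∀ v : V, (∀ w : V, polar Q v w = 0) → v = 0)
    (star : V → V → V)
    (hadd1 : ∀ x y z : V, star (x + y) z = star x z + star y z)
    (hadd2 : ∀ x y z : V, star x (y + z) = star x y + star x z)
    (hQmul : ∀ x y : V, Q (star x y) = ρ (Q x) * ρ (ρ (Q y)))
    (hb : ∀ x y z : V,
      polar Q (star x y) z = ρ (polar Q (star y z) x) ∧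
      polar Q (star x y) z = ρ (ρ (polar Q (star z x) y))) :
    ∀ x y : V, star (star x y) x = ρ (ρ (Q x)) • y ∧
      star x (star y x) = ρ (Q x) • y := fun x y =>
  ⟨star_star_self_left (ρ := ρ.toRingHom) hρ3 hQnd hQmul hadd2 (fun x y z => (hb x y z).1) x y,
    star_self_star_right (ρ := ρ.toRingHom) hρ3 hQnd hQmul hadd1 (fun x y z => (hb x y z).2) x y⟩

/-- Any cyclic composition `(V, L, ρ, *, Q)` over a cubic Galois `F`-algebra
`L` satisfies `(x*y)*x = ρ²(Q(x))·y` and `x*(y*x) = ρ(Q(x))·y`. -/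
theorem stmt_12 (F : Type*) [Field F] (L : Type*) [CommRing L] [Algebra F L]
    (ρ : L ≃ₐ[F] L) (hρ3 : ∀ ℓ : L, ρ (ρ (ρ ℓ)) = ℓ)
    (hfix : ∀ ℓ : L, ρ ℓ = ℓ → ∃ a : F, algebraMap F L a = ℓ)
    (hdim : Module.finrank F L = 3)
    (V : Type*) [AddCommGroup V] [Module L V] [Module.Free L V]
    (Q : QuadraticMap L V L)
    (hQnd : ∀ v : V, (∀ w : V, polar Q v w = 0) → v = 0)
    (star : V → V → V)
    (hadd1 : ∀ x y z : V, star (x + y) z = star x z + star y z)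
    (hadd2 : ∀ x y z : V, star x (y + z) = star x y + star x z)
    (hsl1 : ∀ (ℓ : L) (x y : V), star (ℓ • x) y = ρ ℓ • star x y)
    (hsl2 : ∀ (ℓ : L) (x y : V), star x (ℓ • y) = ρ (ρ ℓ) • star x y)
    (hQmul : ∀ x y : V, Q (star x y) = ρ (Q x) * ρ (ρ (Q y)))
    (hb : ∀ x y z : V,
      polar Q (star x y) z = ρ (polar Q (star y z) x) ∧
      polar Q (star x y) z = ρ (ρ (polar Q (star z x) y))) :
    ∀ x y : V, star (star x y) x = ρ (ρ (Q x)) • y ∧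
      star x (star y x) = ρ (Q x) • y :=
  stmt_12_general F L ρ hρ3 V Q hQnd star hadd1 hadd2 hQmul hb
end

section
/- Let (V, L, β, Q) be a twisted composition over a cubic étale F-algebra L, and let λ, μ ∈ L^×. Then β̃(v) := λ·β(v) and Q̃(v) := μ·Q(v) define a twisted composition (V, L, β̃, Q̃) if and only if μ = λ♯. -/
open QuadraticMap

universe u

/-!
On units the adjoint is multiplicative and `λ♯♯ = N(λ) λ`; this makes `μ = λ♯` work.
Conversely, `Q` takes a unit value `Q v₀` because `L` is a finite product of fields, and comparing
`μ Q(λ β v₀) = (μ Q v₀)♯` with `Q(β v₀) = Q(v₀)♯` gives `μ♯ = μ λ²`. Writing `μ = ε λ♯` this becomes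
`ε♯ = ε`, whence `ε² = N(ε) = 1`. If `ε ∈ F` then `ε = ε♯ = ε² = 1`. Otherwise the condition
`μ b_Q(v, λ β v) ∈ F` forces `b_Q(v, β v) = 0` for all `v`. Polarizing this cubic form at `g w`,
where `g = (1 - ε) / 2` is an idempotent with `g♯ = 1 - g`, shows `(1 - g) β = 0`, which contradicts
`Q(β v₀) = Q(v₀)♯` being a unit.
-/

theorem QuadraticMap.map_sub_eq_sub_polar {R M N : Type*} [CommRing R] [AddCommGroup M]
    [AddCommGroup N] [Module R M] [Module R N] (Q : QuadraticMap R M N) (x y : M) :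
    Q (x - y) = Q x + Q y - polar Q x y := by
  rw [sub_eq_add_neg, QuadraticMap.map_add Q, QuadraticMap.map_neg, polar_neg_right,
    sub_eq_add_neg]

theorem QuadraticMap.exists_isUnit_apply {L V : Type*} [CommRing L] [IsArtinianRing L]
    [IsReduced L] [AddCommGroup V] [Module L V] [FaithfulSMul L V] {Q : QuadraticMap L V L}
    (hQ : (polarBilin Q).SeparatingLeft) : ∃ v, IsUnit (Q v) := by
  classical
  -- Glue, along the primitive idempotents `e m` of `L ≅ ∏ L ⧸ m`, vectors whose values are
  -- nonzero modulo each maximal ideal `m`.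
  have := Fintype.ofFinite (MaximalSpectrum L)
  let φ := IsArtinianRing.equivPi L
  let e : MaximalSpectrum L → L := fun m => φ.symm (Pi.single m 1)
  have hproj : ∀ m x, φ (e m * x) = Pi.single m (φ x m) := by
    intro m x
    rw [map_mul, AlgEquiv.apply_symm_apply]
    ext n
    rcases eq_or_ne n m with rfl | h <;> simp [*]
  have hsep : ∀ m, ∃ v, φ (Q v) m ≠ 0 := by
    intro m
    by_contra! h
    have he : e m = 0 := eq_of_smul_eq_smul fun v => by
      rw [zero_smul]
      refine hQ _ fun w => φ.injective ?_
      simp [hproj, polar, h]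
    have := Ideal.Quotient.nontrivial_iff.mpr m.isMaximal.ne_top
    simpa [he] using congrFun (hproj m 1) m
  choose w hw using hsep
  refine ⟨∑ m, e m • w m, (isUnit_map_iff φ _).mp (Pi.isUnit_iff.mpr fun m => ?_)⟩
  have hew : e m • ∑ n, e n • w n = e m • w m := by
    have horth : ∀ n, e m * e n = if n = m then e m else 0 := by
      intro n
      apply φ.injective
      rw [hproj]
      split_ifs with h
      · simp [e, h]
      · simp [e, Ne.symm h]
    simp [Finset.smul_sum, smul_smul, horth]
  have hQm : φ (Q (∑ n, e n • w n)) m = φ (Q (w m)) m := by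
    simpa [QuadraticMap.map_smul, mul_assoc, hproj] using congrArg (fun v => φ (Q v) m) hew
  have := m.isMaximal
  let := Ideal.Quotient.field m.asIdeal
  exact isUnit_iff_ne_zero.mpr (by rw [hQm]; exact hw m)

section

variable {F L V : Type*} [Field F] [CommRing L] [Algebra F L]

theorem isUnit_two_of_ne_zero (h2 : (2 : F) ≠ 0) : IsUnit (2 : L) :=
  map_ofNat (algebraMap F L) 2 ▸ h2.isUnit.map (algebraMap F L)

theorem eq_zero_of_mul_algebraMap_eq_algebraMap {ε : L}
    (hε : ε ∉ Set.range (algebraMap F L)) {a b : F}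
    (h : ε * algebraMap F L a = algebraMap F L b) : a = 0 := by
  by_contra ha
  refine hε ⟨b * a⁻¹, ?_⟩
  rw [map_mul, ← h, mul_assoc, ← map_mul, mul_inv_cancel₀ ha, map_one, mul_one]

theorem QuadraticMap.eq_zero_of_forall_mul_apply_self_eq_zero (h2 : (2 : F) ≠ 0)
    {d : QuadraticMap F L L} (hd : ∀ m, m * d m = 0) : d = 0 := by
  have hpolar : ∀ x y, x * d y + y * polar d x y = 0 := by
    intro x y
    have hadd := hd (x + y)
    have hsub := hd (x - y)
    rw [map_sub_eq_sub_polar] at hsub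
    rw [polar] at hsub ⊢
    apply (isUnit_two_of_ne_zero h2).mul_left_cancel
    linear_combination hadd + hsub - 2 * hd x
  have hd1 : d 1 = 0 := by simpa using hd 1
  have hp1 : ∀ x, polar d x 1 = 0 := fun x => by simpa [hd1] using hpolar x 1
  ext m
  simpa [polar_comm d 1, hp1] using hpolar 1 m

section Adjoint

variable {sharp : QuadraticMap F L L}

theorem sharp_one (hsharp : ∀ ℓ, ℓ * sharp ℓ = algebraMap F L (Algebra.norm F ℓ)) :
    sharp 1 = 1 := by
  simpa using hsharp 1

theorem sharp_algebraMap (hsharp : ∀ ℓ, ℓ * sharp ℓ = algebraMap F L (Algebra.norm F ℓ))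
    (c : F) : sharp (algebraMap F L c) = algebraMap F L (c * c) := by
  rw [Algebra.algebraMap_eq_smul_one, QuadraticMap.map_smul, sharp_one hsharp,
    Algebra.algebraMap_eq_smul_one]

theorem isUnit_sharp (hsharp : ∀ ℓ, ℓ * sharp ℓ = algebraMap F L (Algebra.norm F ℓ))
    {u : L} (hu : IsUnit u) : IsUnit (sharp u) :=
  isUnit_of_mul_isUnit_right (hsharp u ▸ (hu.map (Algebra.norm F)).map (algebraMap F L))

theorem sharp_mul_of_isUnit (h2 : (2 : F) ≠ 0)
    (hsharp : ∀ ℓ, ℓ * sharp ℓ = algebraMap F L (Algebra.norm F ℓ)) {u : L}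
    (hu : IsUnit u) (m : L) : sharp (u * m) = sharp u * sharp m := by
  -- `d m = u (u m)♯ - N(u) m♯` is an `F`-quadratic map with `m * d m = 0`, hence zero.
  let d := u • sharp.comp (LinearMap.mulLeft F u) - algebraMap F L (Algebra.norm F u) • sharp
  have hd : d = 0 := by
    refine QuadraticMap.eq_zero_of_forall_mul_apply_self_eq_zero h2 fun m => ?_
    have hN : algebraMap F L (Algebra.norm F (u * m))
        = algebraMap F L (Algebra.norm F u) * algebraMap F L (Algebra.norm F m) := by
      rw [map_mul, map_mul]
    simp only [d, sub_apply, smul_apply, QuadraticMap.comp_apply, LinearMap.mulLeft_apply,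
      smul_eq_mul]
    linear_combination hsharp (u * m) - algebraMap F L (Algebra.norm F u) * hsharp m + hN
  have hdm := congrArg (· m) hd
  simp only [d, sub_apply, smul_apply, QuadraticMap.comp_apply, LinearMap.mulLeft_apply,
    smul_eq_mul, zero_apply] at hdm
  apply hu.mul_left_cancel
  linear_combination hdm - sharp m * hsharp u

theorem sharp_sharp_of_isUnit (hdim : Module.finrank F L = 3)
    (hsharp : ∀ ℓ, ℓ * sharp ℓ = algebraMap F L (Algebra.norm F ℓ)) {u : L}
    (hu : IsUnit u) : sharp (sharp u) = algebraMap F L (Algebra.norm F u) * u := by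
  have hNu : IsUnit (Algebra.norm F u) := hu.map (Algebra.norm F)
  have hN : Algebra.norm F (sharp u) = Algebra.norm F u ^ 2 := by
    have h := congrArg (Algebra.norm F) (hsharp u)
    rw [map_mul, Algebra.norm_algebraMap, hdim] at h
    apply hNu.mul_left_cancel
    linear_combination h
  have hN' := congrArg (algebraMap F L) hN
  rw [map_pow] at hN'
  apply (hNu.map (algebraMap F L)).mul_left_cancel
  linear_combination u * hsharp (sharp u) - sharp (sharp u) * hsharp u + u * hN'

theorem sharp_eq_self_of_sharp_mul_sharp_eq (h2 : (2 : F) ≠ 0) (hdim : Module.finrank F L = 3)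
    (hsharp : ∀ ℓ, ℓ * sharp ℓ = algebraMap F L (Algebra.norm F ℓ)) {lam ε : L}
    (hlam : IsUnit lam) (h : sharp (ε * sharp lam) = ε * sharp lam * (lam * lam)) :
    sharp ε = ε := by
  rw [mul_comm, sharp_mul_of_isUnit h2 hsharp (isUnit_sharp hsharp hlam),
    sharp_sharp_of_isUnit hdim hsharp hlam] at h
  apply (((hlam.map (Algebra.norm F)).map (algebraMap F L)).mul hlam).mul_left_cancel
  linear_combination h + (ε * lam) * hsharp lam

theorem mul_self_eq_one_of_sharp_eq_self (hdim : Module.finrank F L = 3)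
    (hsharp : ∀ ℓ, ℓ * sharp ℓ = algebraMap F L (Algebra.norm F ℓ)) {ε : L}
    (hε : IsUnit ε) (h : sharp ε = ε) : ε * ε = 1 := by
  have hεε := hsharp ε
  rw [h] at hεε
  have hN : Algebra.norm F ε = 1 := by
    have hN3 := congrArg (Algebra.norm F) hεε
    rw [map_mul, Algebra.norm_algebraMap, hdim] at hN3
    apply ((hε.map (Algebra.norm F)).pow 2).mul_left_cancel
    linear_combination -hN3
  rw [hεε, hN, map_one]

theorem eq_one_of_sharp_eq_self_of_mem_range
    (hsharp : ∀ ℓ, ℓ * sharp ℓ = algebraMap F L (Algebra.norm F ℓ)) {ε : L}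
    (h : sharp ε = ε) (hε2 : ε * ε = 1) (hεF : ε ∈ Set.range (algebraMap F L)) : ε = 1 := by
  obtain ⟨c, rfl⟩ := hεF
  rw [← h, sharp_algebraMap hsharp, map_mul, hε2]

theorem mul_sharp_eq_zero_of_isIdempotentElem
    (hsharp : ∀ ℓ, ℓ * sharp ℓ = algebraMap F L (Algebra.norm F ℓ)) {e : L}
    (he : IsIdempotentElem e) (he1 : e ≠ 1) : e * sharp e = 0 := by
  rcases IsIdempotentElem.iff_eq_zero_or_one.mp (he.map (Algebra.norm F)) with hN | hN
  · rw [hsharp, hN, map_zero]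
  · have hunit : IsUnit e := .of_mul_eq_one _ (by rw [hsharp, hN, map_one])
    exact absurd ((IsIdempotentElem.iff_eq_one_of_isUnit hunit).mp he) he1

theorem sharp_eq_one_sub_of_isIdempotentElem (h2 : (2 : F) ≠ 0)
    (hsharp : ∀ ℓ, ℓ * sharp ℓ = algebraMap F L (Algebra.norm F ℓ)) {g : L}
    (hg : IsIdempotentElem g) (hg0 : g ≠ 0) (hg1 : g ≠ 1)
    (hsharp_sub : sharp (1 - 2 * g) = 1 - 2 * g) : sharp g = 1 - g := by
  have hf1 : 1 - g ≠ 1 := fun h => hg0 (by linear_combination -h)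
  have hadd := QuadraticMap.map_add sharp (1 - g) g
  have hsub := map_sub_eq_sub_polar sharp (1 - g) g
  rw [sub_add_cancel, sharp_one hsharp] at hadd
  rw [sub_sub, ← two_mul, hsharp_sub] at hsub
  have hsum : sharp (1 - g) + sharp g = 1 - g := by
    apply (isUnit_two_of_ne_zero h2).mul_left_cancel
    linear_combination -hadd - hsub
  linear_combination (1 - g) * hsum - mul_sharp_eq_zero_of_isIdempotentElem hsharp hg.one_sub hf1
    + mul_sharp_eq_zero_of_isIdempotentElem hsharp hg hg1 + hg.eq

theorem exists_isIdempotentElem_sharp_eq_one_sub (h2 : (2 : F) ≠ 0)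
    (hsharp : ∀ ℓ, ℓ * sharp ℓ = algebraMap F L (Algebra.norm F ℓ)) {ε : L}
    (hε2 : ε * ε = 1) (hεs : sharp ε = ε) (h1 : ε ≠ 1) (hm1 : ε ≠ -1) :
    ∃ g, IsIdempotentElem g ∧ g ≠ 1 ∧ sharp g = 1 - g := by
  set t := algebraMap F L 2⁻¹
  have ht : t * 2 = 1 := by
    rw [← map_ofNat (algebraMap F L) 2, ← map_mul, inv_mul_cancel₀ h2, map_one]
  have hgε : 1 - 2 * (t * (1 - ε)) = ε := by linear_combination (ε - 1) * ht
  have hg : IsIdempotentElem (t * (1 - ε)) := by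
    unfold IsIdempotentElem
    linear_combination t * (1 - ε) * ht + t ^ 2 * hε2
  have hg0 : t * (1 - ε) ≠ 0 := fun h => h1 (by rw [← hgε, h]; ring)
  have hg1 : t * (1 - ε) ≠ 1 := fun h => hm1 (by rw [← hgε, h]; ring)
  exact ⟨_, hg, hg1,
    sharp_eq_one_sub_of_isIdempotentElem h2 hsharp hg hg0 hg1 (by rw [hgε, hεs])⟩

end Adjoint

section TwistedComposition

variable [AddCommGroup V] [Module L V] [Module F V] {sharp : QuadraticMap F L L}
  {Q : QuadraticMap L V L} {β : QuadraticMap F V V}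

theorem polar_apply_eq_neg_polar_polar (h2 : (2 : F) ≠ 0) (h : ∀ v, polar Q v (β v) = 0)
    (v w : V) : polar Q v (β w) = -polar Q w (polar β v w) := by
  have hadd := h (v + w)
  have hsub := h (v - w)
  rw [QuadraticMap.map_add β] at hadd
  rw [map_sub_eq_sub_polar] at hsub
  simp only [polar_add_left, polar_add_right, polar_sub_left, polar_sub_right, h v, h w]
    at hadd hsub
  apply (isUnit_two_of_ne_zero h2).mul_left_cancel
  rw [polar_comm Q w (β v)] at hadd hsub
  linear_combination hadd + hsub

theorem one_sub_smul_eq_zero_of_polar_apply_self_eq_zero (h2 : (2 : F) ≠ 0)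
    (hQ : (polarBilin Q).SeparatingLeft) (h : ∀ v, polar Q v (β v) = 0) {g : L}
    (hg : IsIdempotentElem g) (hβg : ∀ w, β (g • w) = (1 - g) • β w) (w : V) :
    (1 - g) • β w = 0 := by
  refine hQ _ fun u => ?_
  have key := polar_apply_eq_neg_polar_polar h2 h u (g • w)
  rw [hβg, polar_smul_right, polar_smul_left, smul_eq_mul, smul_eq_mul] at key
  rw [polarBilin_apply_apply, polar_smul_left, smul_eq_mul, polar_comm]
  linear_combination (1 - g) * key + (polar Q w (polar β u (g • w)) - polar Q u (β w)) * hg.eq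

theorem eq_one_of_isIdempotentElem_of_sharp_eq_one_sub (h2 : (2 : F) ≠ 0)
    (hsharp : ∀ ℓ, ℓ * sharp ℓ = algebraMap F L (Algebra.norm F ℓ))
    (hQ : (polarBilin Q).SeparatingLeft)
    (hβ : ∀ (ℓ : L) (v : V), β (ℓ • v) = sharp ℓ • β v)
    (hQβ : ∀ v, Q (β v) = sharp (Q v)) (h : ∀ v, polar Q v (β v) = 0) {v₀ : V}
    (hv₀ : IsUnit (Q v₀)) {g : L} (hg : IsIdempotentElem g) (hsg : sharp g = 1 - g) :
    g = 1 := by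
  have hβg : ∀ w, β (g • w) = (1 - g) • β w := fun w => by rw [hβ, hsg]
  have hker := congrArg Q (one_sub_smul_eq_zero_of_polar_apply_self_eq_zero h2 hQ h hg hβg v₀)
  rw [QuadraticMap.map_smul, map_zero, hQβ, hg.one_sub.eq, smul_eq_mul] at hker
  linear_combination -(isUnit_sharp hsharp hv₀).mul_left_eq_zero.mp hker

theorem eq_sharp_of_scaled_composition (h2 : (2 : F) ≠ 0) (hdim : Module.finrank F L = 3)
    (hsharp : ∀ ℓ, ℓ * sharp ℓ = algebraMap F L (Algebra.norm F ℓ))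
    (hQ : (polarBilin Q).SeparatingLeft)
    (hβ : ∀ (ℓ : L) (v : V), β (ℓ • v) = sharp ℓ • β v)
    (hQβ : ∀ v, Q (β v) = sharp (Q v))
    (hN : ∀ v, ∃ a : F, polar Q v (β v) = algebraMap F L a)
    {v₀ : V} (hv₀ : IsUnit (Q v₀)) {lam mu : L} (hlam : IsUnit lam) (hmu : IsUnit mu)
    (hQ' : ∀ v, mu * Q (lam • β v) = sharp (mu * Q v))
    (hN' : ∀ v, ∃ a : F, mu * polar Q v (lam • β v) = algebraMap F L a) :
    mu = sharp lam := by
  have hkey : sharp mu = mu * (lam * lam) := by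
    apply (isUnit_sharp hsharp hv₀).mul_left_cancel
    have h := hQ' v₀
    rw [QuadraticMap.map_smul, hQβ, sharp_mul_of_isUnit h2 hsharp hmu, smul_eq_mul] at h
    linear_combination -h
  obtain ⟨ε, rfl⟩ : ∃ ε, mu = ε * sharp lam :=
    ⟨mu * ↑(isUnit_sharp hsharp hlam).unit⁻¹, by rw [mul_assoc, IsUnit.val_inv_mul, mul_one]⟩
  have hεs : sharp ε = ε := sharp_eq_self_of_sharp_mul_sharp_eq h2 hdim hsharp hlam hkey
  have hε2 : ε * ε = 1 :=
    mul_self_eq_one_of_sharp_eq_self hdim hsharp (isUnit_of_mul_isUnit_left hmu) hεs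
  suffices hεF : ε ∈ Set.range (algebraMap F L) by
    rw [eq_one_of_sharp_eq_self_of_mem_range hsharp hεs hε2 hεF, one_mul]
  by_contra hεF
  have hN0 : ∀ v, polar Q v (β v) = 0 := fun v => by
    obtain ⟨a, ha⟩ := hN v
    obtain ⟨b, hb⟩ := hN' v
    rw [polar_smul_right, smul_eq_mul, ha, mul_assoc, ← mul_assoc (sharp lam),
      mul_comm (sharp lam), hsharp, ← map_mul] at hb
    have ha0 := (mul_eq_zero.mp (eq_zero_of_mul_algebraMap_eq_algebraMap hεF hb)).resolve_left
      (hlam.map (Algebra.norm F)).ne_zero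
    rw [ha, ha0, map_zero]
  obtain ⟨g, hg, hg1, hsg⟩ := exists_isIdempotentElem_sharp_eq_one_sub h2 hsharp hε2 hεs
    (fun h => hεF ⟨1, h ▸ map_one _⟩) (fun h => hεF ⟨-1, by simp [h]⟩)
  exact hg1 (eq_one_of_isIdempotentElem_of_sharp_eq_one_sub h2 hsharp hQ hβ hQβ hN0 hv₀ hg hsg)

theorem sharp_mul_apply_smul_eq (h2 : (2 : F) ≠ 0) (hdim : Module.finrank F L = 3)
    (hsharp : ∀ ℓ, ℓ * sharp ℓ = algebraMap F L (Algebra.norm F ℓ))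
    (hQβ : ∀ v, Q (β v) = sharp (Q v)) {lam : L} (hlam : IsUnit lam) (v : V) :
    sharp lam * Q (lam • β v) = sharp (sharp lam * Q v) := by
  rw [QuadraticMap.map_smul, hQβ, sharp_mul_of_isUnit h2 hsharp (isUnit_sharp hsharp hlam),
    sharp_sharp_of_isUnit hdim hsharp hlam, smul_eq_mul]
  linear_combination (lam * sharp (Q v)) * hsharp lam

theorem exists_sharp_mul_polar_smul_eq_algebraMap
    (hsharp : ∀ ℓ, ℓ * sharp ℓ = algebraMap F L (Algebra.norm F ℓ))
    (hN : ∀ v, ∃ a : F, polar Q v (β v) = algebraMap F L a) (lam : L) (v : V) :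
    ∃ a : F, sharp lam * polar Q v (lam • β v) = algebraMap F L a := by
  obtain ⟨a, ha⟩ := hN v
  refine ⟨Algebra.norm F lam * a, ?_⟩
  rw [polar_smul_right, smul_eq_mul, ha, map_mul]
  linear_combination (algebraMap F L a) * hsharp lam

end TwistedComposition

end

theorem stmt_13_general (F : Type u) [Field F] (h2 : (2 : F) ≠ 0)
    (L : Type u) [CommRing L] [Algebra F L] [Algebra.FormallyEtale F L]
    (hdim : Module.finrank F L = 3)
    (sharp : QuadraticMap F L L)
    (hsharp : ∀ ℓ : L, ℓ * sharp ℓ = algebraMap F L (Algebra.norm F ℓ))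
    (V : Type*) [AddCommGroup V] [Module L V] [Module F V]
    [Module.Free L V] [Nontrivial V]
    (Q : QuadraticMap L V L)
    (hQnd : ∀ v : V, (∀ w : V, polar Q v w = 0) → v = 0)
    (β : QuadraticMap F V V)
    (hβ : ∀ (ℓ : L) (v : V), β (ℓ • v) = sharp ℓ • β v)
    (hQβ : ∀ v : V, Q (β v) = sharp (Q v))
    (hN : ∀ v : V, ∃ a : F, polar Q v (β v) = algebraMap F L a)
    (lam mu : L) (hlam : IsUnit lam) (hmu : IsUnit mu) :
    ((∀ (ℓ : L) (v : V), lam • β (ℓ • v) = sharp ℓ • (lam • β v)) ∧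
     (∀ v : V, mu * Q (lam • β v) = sharp (mu * Q v)) ∧
     (∀ v : V, ∃ a : F, mu * polar Q v (lam • β v) = algebraMap F L a)) ↔
    mu = sharp lam := by
  have : FiniteDimensional F L := Module.finite_of_finrank_eq_succ hdim
  have : IsReduced L := Algebra.FormallyUnramified.isReduced_of_field F L
  have : IsArtinianRing L := IsArtinianRing.of_finite F L
  have hQ : (polarBilin Q).SeparatingLeft := hQnd
  obtain ⟨v₀, hv₀⟩ := QuadraticMap.exists_isUnit_apply hQ
  refine ⟨fun ⟨_, hQ', hN'⟩ =>
    eq_sharp_of_scaled_composition h2 hdim hsharp hQ hβ hQβ hN hv₀ hlam hmu hQ' hN', ?_⟩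
  rintro rfl
  exact ⟨fun ℓ v => by rw [hβ, smul_comm], sharp_mul_apply_smul_eq h2 hdim hsharp hQβ hlam,
    exists_sharp_mul_polar_smul_eq_algebraMap hsharp hN lam⟩

/-- Let `(V, L, β, Q)` be a twisted composition over a cubic étale `F`-algebra
`L` (with adjoint `♯`, the unique quadratic map with `ℓ·ℓ♯ = N(ℓ)`), and let
`λ, μ ∈ L^×`.  Then `β̃(v) = λ·β(v)` and `Q̃(v) = μ·Q(v)` define a twisted
composition `(V, L, β̃, Q̃)` if and only if `μ = λ♯`. -/
theorem stmt_13 (F : Type u) [Field F] (h2 : (2 : F) ≠ 0)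
    (L : Type u) [CommRing L] [Algebra F L] [Algebra.FormallyEtale F L]
    (hdim : Module.finrank F L = 3)
    (sharp : QuadraticMap F L L)
    (hsharp : ∀ ℓ : L, ℓ * sharp ℓ = algebraMap F L (Algebra.norm F ℓ))
    (V : Type*) [AddCommGroup V] [Module L V] [Module F V] [IsScalarTower F L V]
    [Module.Free L V] [Nontrivial V]
    (Q : QuadraticMap L V L)
    (hQnd : ∀ v : V, (∀ w : V, polar Q v w = 0) → v = 0)
    (β : QuadraticMap F V V)
    (hβ : ∀ (ℓ : L) (v : V), β (ℓ • v) = sharp ℓ • β v)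
    (hQβ : ∀ v : V, Q (β v) = sharp (Q v))
    (hN : ∀ v : V, ∃ a : F, polar Q v (β v) = algebraMap F L a)
    (lam mu : L) (hlam : IsUnit lam) (hmu : IsUnit mu) :
    ((∀ (ℓ : L) (v : V), lam • β (ℓ • v) = sharp ℓ • (lam • β v)) ∧
     (∀ v : V, mu * Q (lam • β v) = sharp (mu * Q v)) ∧
     (∀ v : V, ∃ a : F, mu * polar Q v (lam • β v) = algebraMap F L a)) ↔
    mu = sharp lam :=
  stmt_13_general F h2 L hdim sharp hsharp V Q hQnd β hβ hQβ hN lam mu hlam hmu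
end

section
/- Let C be a Cayley algebra over a field F and suppose C = K ⊕ Ku ⊕ Kv ⊕ K(uv) is the ℤ₂²-grading obtained from a quadratic étale subalgebra K by the Cayley–Dickson doubling process (with u ⊥ K, v ⊥ K ⊕ Ku, n(u), n(v) ≠ 0). Then the map μ : ℤ₂² → F^×/n(K^×) sending each nontrivial element t of the grading group to the class n(x)·n(K^×) for any anisotropic x in the homogeneous component of degree t is a well-defined group homomorphism. -/
/-!
Every component is `K * w` with `w ∈ {1, u, v, u * v}`, and since `n` is multiplicative an
element `a * w` has norm `n a * n w`. Two anisotropic elements `a * w`, `b * w` of one component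
thus have norm ratio `n a / n b = n (n(b)⁻¹ • b̄ * a)`, where the conjugate
`b̄ = polar n b 1 • 1 - b ∈ K` has norm `n b`. For the homomorphism property, the norms of the
`w`'s satisfy `n (w s) * n (w t) = c ^ 2 * n (w (s + t))`, so the product of the norms of
`a * w s` and `b * w t` is `n (w (s + t))` times the norm of `c • (a * b) ∈ K`.
-/

open QuadraticMap

theorem QuadraticMap.map_polar_smul_sub {R M : Type*} [CommRing R] [AddCommGroup M]
    [Module R M] (Q : QuadraticForm R M) {e : M} (he : Q e = 1) (b : M) :
    Q (polar Q b e • e - b) = Q b := by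
  rw [sub_eq_add_neg, QuadraticMap.map_add Q, polar_smul_left, polar_neg_right,
    QuadraticMap.map_smul, QuadraticMap.map_neg, he, polar_comm Q e b, smul_eq_mul, smul_eq_mul]
  ring

theorem ZMod.val_add_val_two (a b : ZMod 2) :
    a.val + b.val = 2 * (a.val * b.val) + (a + b).val := by
  decide +revert

section Composition

variable {F C : Type*} [Field F] [NonAssocRing C] [Module F C]
  {n : QuadraticForm F C} (hcomp : ∀ x y : C, n (x * y) = n x * n y)
include hcomp

theorem map_one_of_multiplicative {u : C} (hnu : n u ≠ 0) : n 1 = 1 := by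
  have h := hcomp u 1
  rw [mul_one] at h
  exact (mul_eq_left₀ hnu).mp h.symm

variable [IsScalarTower F C C] {K : Submodule F C} (hK1 : (1 : C) ∈ K)
  (hKmul : ∀ a ∈ K, ∀ b ∈ K, a * b ∈ K)
include hK1 hKmul

theorem exists_mem_ratio_of_mem_map_mulRight [SMulCommClass F C C] {w x y : C}
    (hx : x ∈ K.map (LinearMap.mulRight F w)) (hy : y ∈ K.map (LinearMap.mulRight F w))
    (hnx : n x ≠ 0) (hny : n y ≠ 0) :
    ∃ k ∈ K, n k ≠ 0 ∧ n x = n y * n k := by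
  obtain ⟨a, haK, rfl⟩ := hx
  obtain ⟨b, hbK, rfl⟩ := hy
  simp only [LinearMap.mulRight_apply, hcomp] at hnx hny ⊢
  have h1 : n 1 = 1 := map_one_of_multiplicative hcomp (left_ne_zero_of_mul hny)
  have hbar : n (polar n b 1 • 1 - b) = n b := n.map_polar_smul_sub h1 b
  have hbarK : polar n b 1 • 1 - b ∈ K := K.sub_mem (K.smul_mem _ hK1) hbK
  have hnb := left_ne_zero_of_mul hny
  refine ⟨(n b)⁻¹ • ((polar n b 1 • 1 - b) * a), K.smul_mem _ (hKmul _ hbarK _ haK),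
    ?_, ?_⟩
  · rw [QuadraticMap.map_smul, hcomp, hbar, smul_eq_mul]
    exact mul_ne_zero (mul_ne_zero (inv_ne_zero hnb) (inv_ne_zero hnb))
      (mul_ne_zero hnb (left_ne_zero_of_mul hnx))
  · rw [QuadraticMap.map_smul, hcomp, hbar, smul_eq_mul]
    field_simp

omit hK1 in
theorem exists_mem_mul_of_mem_map_mulRight {w₁ w₂ w₃ x y : C} {c : F} (hc : c ≠ 0)
    (hw : n w₁ * n w₂ = c ^ 2 * n w₃)
    (hx : x ∈ K.map (LinearMap.mulRight F w₁)) (hy : y ∈ K.map (LinearMap.mulRight F w₂))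
    (hnx : n x ≠ 0) (hny : n y ≠ 0) :
    ∃ k ∈ K, n k ≠ 0 ∧ n x * n y = n w₃ * n k := by
  obtain ⟨a, haK, rfl⟩ := hx
  obtain ⟨b, hbK, rfl⟩ := hy
  simp only [LinearMap.mulRight_apply, hcomp] at hnx hny ⊢
  refine ⟨c • (a * b), K.smul_mem _ (hKmul _ haK _ hbK), ?_, ?_⟩
  · rw [QuadraticMap.map_smul, hcomp, smul_eq_mul]
    exact mul_ne_zero (mul_ne_zero hc hc)
      (mul_ne_zero (left_ne_zero_of_mul hnx) (left_ne_zero_of_mul hny))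
  · rw [QuadraticMap.map_smul, hcomp, smul_eq_mul]
    linear_combination (n a * n b) * hw

end Composition

section Doubling

variable {F C : Type*} [Field F] [NonAssocRing C] [Module F C]

def doublingUnit (u v : C) (t : ZMod 2 × ZMod 2) : C :=
  if t = (0, 0) then 1 else if t = (1, 0) then u else if t = (0, 1) then v else u * v

theorem doublingComponent_eq_map [IsScalarTower F C C] (K : Submodule F C) (u v : C)
    (t : ZMod 2 × ZMod 2) :
    (if t = (0, 0) then K
      else if t = (1, 0) then K.map (LinearMap.mulRight F u)
      else if t = (0, 1) then K.map (LinearMap.mulRight F v)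
      else K.map (LinearMap.mulRight F (u * v))) =
      K.map (LinearMap.mulRight F (doublingUnit u v t)) := by
  unfold doublingUnit
  split_ifs
  · rw [LinearMap.mulRight_one, Submodule.map_id]
  all_goals rfl

variable {n : QuadraticForm F C} (hcomp : ∀ x y : C, n (x * y) = n x * n y)
  {u v : C} (hnu : n u ≠ 0)
include hcomp hnu

theorem map_doublingUnit (t : ZMod 2 × ZMod 2) :
    n (doublingUnit u v t) = n u ^ t.1.val * n v ^ t.2.val := by
  have h1 := map_one_of_multiplicative hcomp hnu
  fin_cases t <;> simp +decide [doublingUnit, hcomp, h1, ZMod.val]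

theorem map_doublingUnit_mul_map_doublingUnit (s t : ZMod 2 × ZMod 2) :
    n (doublingUnit u v s) * n (doublingUnit u v t) =
      (n u ^ (s.1.val * t.1.val) * n v ^ (s.2.val * t.2.val)) ^ 2 *
        n (doublingUnit u v (s + t)) := by
  simp only [map_doublingUnit hcomp hnu, Prod.fst_add, Prod.snd_add]
  calc n u ^ s.1.val * n v ^ s.2.val * (n u ^ t.1.val * n v ^ t.2.val)
      = n u ^ (s.1.val + t.1.val) * n v ^ (s.2.val + t.2.val) := by ring
    _ = _ := by
      rw [ZMod.val_add_val_two s.1, ZMod.val_add_val_two s.2]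
      ring

variable (hnv : n v ≠ 0)
include hnv

theorem map_doublingUnit_ne_zero (t : ZMod 2 × ZMod 2) : n (doublingUnit u v t) ≠ 0 := by
  rw [map_doublingUnit hcomp hnu]
  exact mul_ne_zero (pow_ne_zero _ hnu) (pow_ne_zero _ hnv)

end Doubling

theorem stmt_16_general (F : Type*) [Field F] (C : Type*) [NonAssocRing C] [Module F C]
    [SMulCommClass F C C] [IsScalarTower F C C]
    (n : QuadraticForm F C)
    (hcomp : ∀ x y : C, n (x * y) = n x * n y)
    (K : Submodule F C) (hK1 : (1 : C) ∈ K)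
    (hKmul : ∀ a ∈ K, ∀ b ∈ K, a * b ∈ K)
    (u v : C)
    (hnu : n u ≠ 0)
    (hnv : n v ≠ 0) :
    let Comp : ZMod 2 × ZMod 2 → Submodule F C := fun t =>
      if t = (0, 0) then K
      else if t = (1, 0) then Submodule.map (LinearMap.mulRight F u) K
      else if t = (0, 1) then Submodule.map (LinearMap.mulRight F v) K
      else Submodule.map (LinearMap.mulRight F (u * v)) K
    (∀ t : ZMod 2 × ZMod 2, ∀ x ∈ Comp t, ∀ y ∈ Comp t, n x ≠ 0 → n y ≠ 0 →
      ∃ k ∈ K, n k ≠ 0 ∧ n x = n y * n k) ∧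
    (∀ s t : ZMod 2 × ZMod 2, ∀ x ∈ Comp s, ∀ y ∈ Comp t, n x ≠ 0 → n y ≠ 0 →
      ∃ z ∈ Comp (s + t), n z ≠ 0 ∧ ∃ k ∈ K, n k ≠ 0 ∧ n x * n y = n z * n k) := by
  intro Comp
  have hComp (t) : Comp t = K.map (LinearMap.mulRight F (doublingUnit u v t)) :=
    doublingComponent_eq_map K u v t
  refine ⟨fun t x hx y hy ↦ ?_, fun s t x hx y hy hnx hny ↦ ?_⟩
  · rw [hComp] at hx hy
    exact exists_mem_ratio_of_mem_map_mulRight hcomp hK1 hKmul hx hy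
  · rw [hComp] at hx hy ⊢
    refine ⟨doublingUnit u v (s + t), ⟨1, hK1, one_mul _⟩,
      map_doublingUnit_ne_zero hcomp hnu hnv _, ?_⟩
    refine exists_mem_mul_of_mem_map_mulRight hcomp hKmul ?_
      (map_doublingUnit_mul_map_doublingUnit hcomp hnu s t) hx hy hnx hny
    exact mul_ne_zero (pow_ne_zero _ hnu) (pow_ne_zero _ hnv)

/-- Let `C = K ⊕ Ku ⊕ Kv ⊕ K(uv)` be the `ℤ₂²`-grading of a Cayley algebra
obtained from a quadratic étale subalgebra `K` by the Cayley–Dickson doubling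
process.  Then the map `μ : ℤ₂² → F^×/n(K^×)` sending each element `t` of the
grading group to the class of `n(x)` for any anisotropic `x` in the component
of degree `t` is well defined (independent of the choice of `x`) and is a
group homomorphism. -/
theorem stmt_16 (F : Type*) [Field F] (C : Type*) [NonAssocRing C] [Module F C]
    [SMulCommClass F C C] [IsScalarTower F C C] [FiniteDimensional F C]
    (n : QuadraticForm F C) (hdim : Module.finrank F C = 8)
    (hcomp : ∀ x y : C, n (x * y) = n x * n y)
    (hnd : ∀ x : C, (∀ y : C, polar n x y = 0) → x = 0)
    (K : Submodule F C) (hK1 : (1 : C) ∈ K)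
    (hKmul : ∀ a ∈ K, ∀ b ∈ K, a * b ∈ K)
    (hKdim : Module.finrank F K = 2)
    (hKnd : ∀ x ∈ K, (∀ y ∈ K, polar n x y = 0) → x = 0)
    (u v : C)
    (hu : ∀ k ∈ K, polar n k u = 0) (hnu : n u ≠ 0)
    (hv : ∀ x ∈ K ⊔ Submodule.map (LinearMap.mulRight F u) K, polar n x v = 0)
    (hnv : n v ≠ 0)
    (hsum : K ⊔ Submodule.map (LinearMap.mulRight F u) K ⊔
        Submodule.map (LinearMap.mulRight F v) K ⊔
        Submodule.map (LinearMap.mulRight F (u * v)) K = ⊤) :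
    let Comp : ZMod 2 × ZMod 2 → Submodule F C := fun t =>
      if t = (0, 0) then K
      else if t = (1, 0) then Submodule.map (LinearMap.mulRight F u) K
      else if t = (0, 1) then Submodule.map (LinearMap.mulRight F v) K
      else Submodule.map (LinearMap.mulRight F (u * v)) K
    (∀ t : ZMod 2 × ZMod 2, ∀ x ∈ Comp t, ∀ y ∈ Comp t, n x ≠ 0 → n y ≠ 0 →
      ∃ k ∈ K, n k ≠ 0 ∧ n x = n y * n k) ∧
    (∀ s t : ZMod 2 × ZMod 2, ∀ x ∈ Comp s, ∀ y ∈ Comp t, n x ≠ 0 → n y ≠ 0 →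
      ∃ z ∈ Comp (s + t), n z ≠ 0 ∧ ∃ k ∈ K, n k ≠ 0 ∧ n x * n y = n z * n k) :=
  stmt_16_general F C n hcomp K hK1 hKmul u v hnu hnv
end
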